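/- arXiv:1312.0680 — 2 statements merged into one kernel-verified Lean document; each statement's English description precedes it below -/
import Mathlib

section
/- If a state ρ can be transformed to a state σ by a U(1)-covariant channel, then Modes(σ) ⊆ Modes(ρ), where Modes(ρ) is the set of integers k for which the mode-k component ρ^(k) is nonzero. -/
open Complex Matrix MeasureTheory
open scoped ComplexOrder

/-- The unitary representation of U(1) on a finite-dimensional Hilbert space with
orthonormal basis indexed by `ι`, where basis vector `i` carries integer charge `c i`:
`U(θ) = Σ_n e^{inθ} Π_n`. -/
noncomputable def Urep {ι : Type*} [Fintype ι] [DecidableEq ι] (c : ι → ℤ) (θ : ℝ) :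
    Matrix ι ι ℂ :=
  Matrix.diagonal fun i => Complex.exp (Complex.I * (c i : ℂ) * (θ : ℂ))

/-- The mode-`k` component of an operator: `A^(k) = Σ_n Π_{n+k} A Π_n`. -/
def modeComp {ι : Type*} [Fintype ι] [DecidableEq ι] (c : ι → ℤ) (k : ℤ)
    (A : Matrix ι ι ℂ) : Matrix ι ι ℂ :=
  Matrix.of fun i j => if c i - c j = k then A i j else 0

/-- The trace norm `‖A‖₁ = tr √(A†A)`. -/
noncomputable def traceNorm {ι : Type*} [Fintype ι] [DecidableEq ι]
    (A : Matrix ι ι ℂ) : ℝ :=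
  (((Matrix.posSemidef_conjTranspose_mul_self A).1.eigenvectorUnitary.1 *
      Matrix.diagonal (((↑) : ℝ → ℂ) ∘ (√·) ∘ (Matrix.posSemidef_conjTranspose_mul_self A).1.eigenvalues) *
      (star (Matrix.posSemidef_conjTranspose_mul_self A).1.eigenvectorUnitary : Matrix ι ι ℂ)).trace).re

/-- The Choi matrix of a linear superoperator. -/
noncomputable def choi {ι κ : Type*} [Fintype ι] [DecidableEq ι] [Fintype κ]
    (E : Matrix ι ι ℂ →ₗ[ℂ] Matrix κ κ ℂ) : Matrix (ι × κ) (ι × κ) ℂ :=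
  Matrix.of fun p q => E (Matrix.single p.1 q.1 1) p.2 q.2

/-- A quantum channel: completely positive (positive semidefinite Choi matrix)
and trace preserving. -/
def IsCPTP {ι κ : Type*} [Fintype ι] [DecidableEq ι] [Fintype κ]
    (E : Matrix ι ι ℂ →ₗ[ℂ] Matrix κ κ ℂ) : Prop :=
  (choi E).PosSemidef ∧ ∀ A : Matrix ι ι ℂ, (E A).trace = A.trace

/-- U(1)-covariance of a superoperator with respect to input charges `c`
and output charges `d`. -/
def IsCovariant {ι κ : Type*} [Fintype ι] [DecidableEq ι] [Fintype κ] [DecidableEq κ]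
    (c : ι → ℤ) (d : κ → ℤ) (E : Matrix ι ι ℂ →ₗ[ℂ] Matrix κ κ ℂ) : Prop :=
  ∀ (θ : ℝ) (X : Matrix ι ι ℂ),
    E (Urep c θ * X * (Urep c θ)ᴴ) = Urep d θ * E X * (Urep d θ)ᴴ

/-- A density operator (quantum state). -/
def IsDensity {ι : Type*} [Fintype ι] (ρ : Matrix ι ι ℂ) : Prop :=
  ρ.PosSemidef ∧ ρ.trace = 1

/-!
Conjugating the matrix unit `single i j x` by `U(θ)` multiplies it by the character
`e^{i (c i - c j) θ}`, so covariance and the linear independence of distinct characters force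
`E (single i j x)` to be supported on the entries `(a, b)` with `d a - d b = c i - c j`.
Hence `E` maps mode components to mode components, `σ^(k) = E (ρ^(k))`, and `σ^(k)` vanishes
whenever `ρ^(k)` does.
-/

lemma exists_exp_I_mul_int_mul_ne_one {k : ℤ} (hk : k ≠ 0) :
    ∃ θ : ℝ, Complex.exp (Complex.I * k * θ) ≠ 1 := by
  refine ⟨Real.pi / k, ?_⟩
  have hk' : (k : ℂ) ≠ 0 := Int.cast_ne_zero.mpr hk
  rw [show Complex.I * k * ((Real.pi / k : ℝ) : ℂ) = Real.pi * Complex.I by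
    push_cast; field_simp, Complex.exp_pi_mul_I]
  norm_num

lemma eq_zero_of_forall_exp_mul_eq {m n : ℤ} (hmn : m ≠ n) {z : ℂ}
    (hz : ∀ θ : ℝ, Complex.exp (Complex.I * m * θ) * z = Complex.exp (Complex.I * n * θ) * z) :
    z = 0 := by
  by_contra hz0
  obtain ⟨θ, hθ⟩ := exists_exp_I_mul_int_mul_ne_one (sub_ne_zero.mpr hmn)
  apply hθ
  have h := hz θ
  rw [show Complex.I * m * θ = Complex.I * ((m - n : ℤ) : ℂ) * θ + Complex.I * n * θ by
    push_cast; ring, Complex.exp_add, mul_assoc] at h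
  exact (mul_eq_right₀ (mul_ne_zero (Complex.exp_ne_zero _) hz0)).mp h

lemma Urep_mul_mul_conjTranspose_apply {ι : Type*} [Fintype ι] [DecidableEq ι] (c : ι → ℤ)
    (θ : ℝ) (X : Matrix ι ι ℂ) (a b : ι) :
    (Urep c θ * X * (Urep c θ)ᴴ) a b =
      Complex.exp (Complex.I * ((c a - c b : ℤ) : ℂ) * θ) * X a b := by
  simp only [Urep, diagonal_conjTranspose, mul_diagonal, diagonal_mul, Pi.star_apply,
    Complex.star_def, ← Complex.exp_conj, map_mul, Complex.conj_I, Complex.conj_ofReal,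
    map_intCast]
  rw [mul_right_comm, ← Complex.exp_add]
  congr 2
  push_cast
  ring

lemma Urep_mul_single_mul_conjTranspose {ι : Type*} [Fintype ι] [DecidableEq ι] (c : ι → ℤ)
    (θ : ℝ) (i j : ι) (x : ℂ) :
    Urep c θ * single i j x * (Urep c θ)ᴴ =
      Complex.exp (Complex.I * ((c i - c j : ℤ) : ℂ) * θ) • single i j x := by
  ext a b
  rw [Urep_mul_mul_conjTranspose_apply, Matrix.smul_apply, smul_eq_mul, single_apply]
  split_ifs with h
  · rw [h.1, h.2]
  · simp

namespace IsCovariant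

variable {ι κ : Type*} [Fintype ι] [DecidableEq ι] [Fintype κ] [DecidableEq κ]
  {c : ι → ℤ} {d : κ → ℤ} {E : Matrix ι ι ℂ →ₗ[ℂ] Matrix κ κ ℂ}

lemma apply_single_apply_eq_zero (hcov : IsCovariant c d E) {i j : ι} {a b : κ}
    {x : ℂ} (h : c i - c j ≠ d a - d b) : E (single i j x) a b = 0 := by
  refine eq_zero_of_forall_exp_mul_eq h fun θ => ?_
  have h := congrFun₂ (hcov θ (single i j x)) a b
  rwa [Urep_mul_single_mul_conjTranspose, map_smul, Matrix.smul_apply, smul_eq_mul,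
    Urep_mul_mul_conjTranspose_apply] at h

lemma modeComp_map (hcov : IsCovariant c d E) (k : ℤ) (X : Matrix ι ι ℂ) :
    modeComp d k (E X) = E (modeComp c k X) := by
  ext a b
  conv_lhs => rw [matrix_eq_sum_single X]
  conv_rhs => rw [matrix_eq_sum_single (modeComp c k X)]
  simp only [modeComp, of_apply, map_sum, Matrix.sum_apply]
  by_cases hab : d a - d b = k
  · simp only [hab, if_true]
    refine Finset.sum_congr rfl fun i _ => Finset.sum_congr rfl fun j _ => ?_
    split_ifs with hij
    · rfl
    · rw [single_zero, map_zero, Matrix.zero_apply, hcov.apply_single_apply_eq_zero (hab ▸ hij)]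
  · simp only [hab, if_false]
    refine (Finset.sum_eq_zero fun i _ => Finset.sum_eq_zero fun j _ => ?_).symm
    split_ifs with hij
    · exact hcov.apply_single_apply_eq_zero (hij ▸ Ne.symm hab)
    · rw [single_zero, map_zero, Matrix.zero_apply]

end IsCovariant

theorem stmt_6_general {ι κ : Type*} [Fintype ι] [DecidableEq ι] [Fintype κ] [DecidableEq κ]
    (c : ι → ℤ) (d : κ → ℤ)
    (E : Matrix ι ι ℂ →ₗ[ℂ] Matrix κ κ ℂ)
    (hcov : IsCovariant c d E)
    (ρ : Matrix ι ι ℂ)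
    (σ : Matrix κ κ ℂ) (hσ : E ρ = σ) :
    {k : ℤ | modeComp d k σ ≠ 0} ⊆ {k : ℤ | modeComp c k ρ ≠ 0} := by
  intro k hσk hρk
  apply hσk
  rw [← hσ, hcov.modeComp_map, hρk, map_zero]

/-- if a U(1)-covariant channel transforms ρ into σ, then
`Modes(σ) ⊆ Modes(ρ)`, where `Modes(ρ) = {k : ρ^(k) ≠ 0}`. -/
theorem stmt_6 {ι κ : Type*} [Fintype ι] [DecidableEq ι] [Fintype κ] [DecidableEq κ]
    (c : ι → ℤ) (d : κ → ℤ)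
    (E : Matrix ι ι ℂ →ₗ[ℂ] Matrix κ κ ℂ)
    (hCPTP : IsCPTP E) (hcov : IsCovariant c d E)
    (ρ : Matrix ι ι ℂ) (hρ : IsDensity ρ)
    (σ : Matrix κ κ ℂ) (hσ : E ρ = σ) :
    {k : ℤ | modeComp d k σ ≠ 0} ⊆ {k : ℤ | modeComp c k ρ ≠ 0} :=
  stmt_6_general c d E hcov ρ σ hσ
end

section
/- If a nondeterministic U(1)-covariant operation transforms the pure state |ψ⟩ = Σ_n ψ_n|n⟩ to the pure state |φ⟩ = Σ_n φ_n|n⟩ with success probability p, then for every positive integer k, p ≤ (Σ_n |ψ_{n+k}||ψ_n|) / (Σ_n |φ_{n+k}||φ_n|), whenever the denominator is nonzero. -/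
open Complex Matrix MeasureTheory
open scoped ComplexOrder

/-!
Pair the output of the channel with the functional
`T X = Σ_{d s - d t = k} e^{-i arg(φ_s φ̄_t)} ⟨s, succ| X |t, succ⟩`.
On the output state it evaluates to `p Σ_n |φ_{n+k}| |φ_n|`, the failure branch contributing
nothing. Covariance makes `T ∘ E` vanish on every `|i⟩⟨j|` with `c i - c j ≠ k`, while complete
positivity and trace preservation (through `2 |M_pq| ≤ M_pp + M_qq` for the Choi matrix, and the
injectivity of `d`) give `|T (E |i⟩⟨j|)| ≤ 1`. Expanding `|ψ⟩⟨ψ|` in the basis `|i⟩⟨j|` then yields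
`p Σ_n |φ_{n+k}| |φ_n| ≤ Σ_n |ψ_{n+k}| |ψ_n|`.
-/

lemma sum_ite_le_of_subsingleton {κ : Type*} [Fintype κ] {P : κ → Prop} [DecidablePred P]
    (hP : ∀ t t', P t → P t' → t = t') {x : ℝ} (hx : 0 ≤ x) :
    ∑ t, (if P t then x else 0) ≤ x := by
  rw [Finset.sum_ite, Finset.sum_const_zero, add_zero, Finset.sum_const, nsmul_eq_mul]
  have hcard : (Finset.univ.filter P).card ≤ 1 :=
    Finset.card_le_one.mpr fun t ht t' ht' => hP t t' (by simpa using ht) (by simpa using ht')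
  calc ((Finset.univ.filter P).card : ℝ) * x ≤ 1 * x := by gcongr; exact_mod_cast hcard
    _ = x := one_mul x

lemma Complex.cexp_neg_arg_mul_I_mul_self (z : ℂ) : cexp (-(arg z : ℂ) * I) * z = ‖z‖ := by
  calc cexp (-(arg z : ℂ) * I) * z = ‖z‖ * (cexp (-(arg z : ℂ) * I) * cexp (arg z * I)) := by
        rw [mul_left_comm, norm_mul_exp_arg_mul_I]
    _ = ‖z‖ := by rw [← Complex.exp_add, neg_mul, neg_add_cancel, Complex.exp_zero, mul_one]

lemma Complex.norm_cexp_neg_arg_mul_I (z : ℂ) : ‖cexp (-(arg z : ℂ) * I)‖ = 1 := by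
  simpa using norm_exp_ofReal_mul_I (-arg z)

lemma Complex.eq_zero_of_forall_cexp_mul_eq {m n : ℤ} (hmn : m ≠ n) {z : ℂ}
    (h : ∀ θ : ℝ, cexp (I * m * θ) * z = cexp (I * n * θ) * z) : z = 0 := by
  have hsub : ((m - n : ℤ) : ℂ) ≠ 0 := Int.cast_ne_zero.mpr (sub_ne_zero.mpr hmn)
  set θ : ℝ := Real.pi / (m - n : ℤ)
  have hflip : cexp (I * m * θ) = -cexp (I * n * θ) := by
    have : I * m * θ = I * n * θ + Real.pi * I := by
      simp only [θ]
      push_cast at hsub ⊢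
      field_simp
      ring
    rw [this, Complex.exp_add, Complex.exp_pi_mul_I, mul_neg_one]
  have h2 : 2 * cexp (I * n * θ) * z = 0 := by linear_combination -(h θ) + z * hflip
  simpa [Complex.exp_ne_zero] using h2

lemma Matrix.PosSemidef.two_mul_norm_apply_le {n : Type*} [Fintype n]
    {M : Matrix n n ℂ} (hM : M.PosSemidef) (p q : n) :
    2 * ‖M p q‖ ≤ (M p p).re + (M q q).re := by
  set w := cexp (-(arg (M p q) : ℂ) * I)
  have hw : star w * w = 1 := by
    rw [Complex.star_def, Complex.conj_mul', norm_cexp_neg_arg_mul_I]; simp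
  have hwM : w * M p q = ‖M p q‖ := cexp_neg_arg_mul_I_mul_self _
  have hwM' : star w * star (M p q) = ‖M p q‖ := by
    rw [← star_mul', hwM, Complex.star_def, Complex.conj_ofReal]
  have hMqp : M q p = star (M p q) := by simpa using (congrFun (congrFun hM.1 q) p).symm
  have hquad : star ![1, -w] ⬝ᵥ (M.submatrix ![p, q] ![p, q] *ᵥ ![1, -w])
      = M p p + M q q - 2 * ‖M p q‖ := by
    simp only [dotProduct, mulVec, Fin.sum_univ_two, submatrix_apply]
    simp only [Fin.isValue, Pi.star_apply, Matrix.cons_val_zero, Matrix.cons_val_one, star_one,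
      star_neg, hMqp]
    linear_combination M q q * hw - hwM - hwM'
  have key := (hM.submatrix ![p, q]).re_dotProduct_nonneg ![1, -w]
  rw [hquad] at key
  simpa [two_mul] using key

section Charge

variable {κ : Type*} [Fintype κ] [DecidableEq κ]

lemma Urep_mul_mul_conjTranspose_apply_s16 (d : κ → ℤ) (θ : ℝ) (A : Matrix κ κ ℂ) (s t : κ) :
    (Urep d θ * A * (Urep d θ)ᴴ) s t = cexp (I * ((d s - d t : ℤ) : ℂ) * θ) * A s t := by
  have hconj : star (cexp (I * (d t : ℂ) * θ)) = cexp (-(I * (d t : ℂ) * θ)) := by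
    rw [Complex.star_def, ← Complex.exp_conj]; simp
  simp only [Urep, diagonal_conjTranspose, mul_diagonal, diagonal_mul, Pi.star_apply, hconj]
  rw [mul_right_comm, ← Complex.exp_add]
  push_cast
  ring_nf

lemma Urep_mul_single_mul_conjTranspose_s16 (d : κ → ℤ) (θ : ℝ) (i j : κ) :
    Urep d θ * single i j 1 * (Urep d θ)ᴴ
      = cexp (I * ((d i - d j : ℤ) : ℂ) * θ) • single i j (1 : ℂ) := by
  ext s t
  rw [Urep_mul_mul_conjTranspose_apply_s16, Matrix.smul_apply, smul_eq_mul]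
  by_cases h : i = s ∧ j = t
  · obtain ⟨rfl, rfl⟩ := h
    rfl
  · simp [h]

end Charge

def IsChargeFunctional {ι : Type*} [Fintype ι] [DecidableEq ι] (c : ι → ℤ) (k : ℤ)
    (f : Matrix ι ι ℂ →ₗ[ℂ] ℂ) : Prop :=
  ∀ (θ : ℝ) (X : Matrix ι ι ℂ), f (Urep c θ * X * (Urep c θ)ᴴ) = cexp (I * k * θ) * f X

/-- `Σ_n |ψ_{n+k}| |ψ_n|`, the mode-`k` trace norm of `|ψ⟩⟨ψ|`. -/
noncomputable def modeOverlap {ι : Type*} [Fintype ι] (c : ι → ℤ) (k : ℤ) (ψ : ι → ℂ) : ℝ :=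
  ∑ i, ∑ j, if c i - c j = k then ‖ψ i‖ * ‖ψ j‖ else 0

lemma modeOverlap_nonneg {ι : Type*} [Fintype ι] (c : ι → ℤ) (k : ℤ) (ψ : ι → ℂ) :
    0 ≤ modeOverlap c k ψ :=
  Finset.sum_nonneg fun _ _ => Finset.sum_nonneg fun _ _ => by split_ifs <;> positivity

namespace IsChargeFunctional

variable {ι : Type*} [Fintype ι] [DecidableEq ι] {c : ι → ℤ} {k : ℤ} {f : Matrix ι ι ℂ →ₗ[ℂ] ℂ}

lemma comp_covariant {κ : Type*} [Fintype κ] [DecidableEq κ] {d : κ → ℤ}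
    {g : Matrix κ κ ℂ →ₗ[ℂ] ℂ} (hg : IsChargeFunctional d k g)
    {E : Matrix ι ι ℂ →ₗ[ℂ] Matrix κ κ ℂ} (hE : IsCovariant c d E) :
    IsChargeFunctional c k (g ∘ₗ E) := fun θ X => by
  simp only [LinearMap.comp_apply, hE θ X, hg θ]

lemma apply_single_eq_zero (hf : IsChargeFunctional c k f) {i j : ι} (hij : c i - c j ≠ k) :
    f (single i j 1) = 0 :=
  Complex.eq_zero_of_forall_cexp_mul_eq hij fun θ => by
    rw [← hf θ, Urep_mul_single_mul_conjTranspose_s16, map_smul, smul_eq_mul]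

lemma norm_apply_vecMulVec_le (hf : IsChargeFunctional c k f)
    (hf₁ : ∀ i j, ‖f (single i j 1)‖ ≤ 1) (ψ : ι → ℂ) :
    ‖f (vecMulVec ψ (star ψ))‖ ≤ modeOverlap c k ψ := by
  have hexpand : f (vecMulVec ψ (star ψ))
      = ∑ i, ∑ j, (ψ i * star (ψ j)) * f (single i j 1) := by
    conv_lhs => rw [matrix_eq_sum_single (vecMulVec ψ (star ψ))]
    simp only [map_sum, vecMulVec_apply, Pi.star_apply]
    refine Finset.sum_congr rfl fun i _ => Finset.sum_congr rfl fun j _ => ?_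
    rw [← smul_eq_mul _ (f _), ← map_smul, smul_single, smul_eq_mul, mul_one]
  rw [hexpand]
  refine (norm_sum_le _ _).trans <| Finset.sum_le_sum fun i _ =>
    (norm_sum_le _ _).trans <| Finset.sum_le_sum fun j _ => ?_
  split_ifs with hij
  · calc ‖ψ i * star (ψ j) * f (single i j 1)‖ ≤ ‖ψ i‖ * ‖ψ j‖ * 1 := by
          rw [norm_mul, norm_mul, norm_star]
          gcongr
          exact hf₁ i j
      _ = ‖ψ i‖ * ‖ψ j‖ := mul_one _
  · rw [hf.apply_single_eq_zero hij, mul_zero, norm_zero]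

end IsChargeFunctional

noncomputable def phaseMatrix {κ : Type*} (φ : κ → ℂ) : Matrix κ κ ℂ :=
  of fun s t => cexp (-(arg (φ s * star (φ t)) : ℂ) * I)

lemma norm_phaseMatrix_apply {κ : Type*} (φ : κ → ℂ) (s t : κ) : ‖phaseMatrix φ s t‖ = 1 :=
  Complex.norm_cexp_neg_arg_mul_I _

section ModePairing

variable {κ : Type*} [Fintype κ] [DecidableEq κ]

noncomputable def modePairing (d : κ → ℤ) (k : ℤ) (W : Matrix κ κ ℂ) :
    Matrix κ κ ℂ →ₗ[ℂ] ℂ where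
  toFun B := ∑ s, ∑ t, modeComp d k W s t * B s t
  map_add' B C := by simp only [Matrix.add_apply, mul_add, Finset.sum_add_distrib]
  map_smul' r B := by
    simp only [Matrix.smul_apply, smul_eq_mul, Finset.mul_sum, RingHom.id_apply, mul_left_comm]

lemma modePairing_apply (d : κ → ℤ) (k : ℤ) (W B : Matrix κ κ ℂ) :
    modePairing d k W B = ∑ s, ∑ t, if d s - d t = k then W s t * B s t else 0 := by
  simp only [modePairing, modeComp, LinearMap.coe_mk, AddHom.coe_mk, of_apply, ite_mul, zero_mul]

lemma isChargeFunctional_modePairing (d : κ → ℤ) (k : ℤ) (W : Matrix κ κ ℂ) :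
    IsChargeFunctional d k (modePairing d k W) := fun θ B => by
  simp only [modePairing_apply, Urep_mul_mul_conjTranspose_apply_s16, Finset.mul_sum, mul_ite,
    mul_zero]
  refine Finset.sum_congr rfl fun s _ => Finset.sum_congr rfl fun t _ => ?_
  split_ifs with h
  · rw [h]; ring
  · rfl

/-- Injectivity of `d` makes the mode-`k` entries a partial matching of rows and columns. -/
lemma norm_modePairing_le {d : κ → ℤ} (hd : Function.Injective d) (k : ℤ) {W B : Matrix κ κ ℂ}
    (hW : ∀ s t, ‖W s t‖ ≤ 1) {a b : κ → ℝ} (ha : ∀ s, 0 ≤ a s) (hb : ∀ t, 0 ≤ b t)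
    (hB : ∀ s t, 2 * ‖B s t‖ ≤ a s + b t) :
    ‖modePairing d k W B‖ ≤ (∑ s, a s + ∑ t, b t) / 2 := by
  have hrow : ∀ s, ∑ t, (if d s - d t = k then a s else 0) ≤ a s := fun s =>
    sum_ite_le_of_subsingleton (fun t t' ht ht' => hd (by omega)) (ha s)
  have hcol : ∀ t, ∑ s, (if d s - d t = k then b t else 0) ≤ b t := fun t =>
    sum_ite_le_of_subsingleton (fun s s' hs hs' => hd (by omega)) (hb t)
  calc ‖modePairing d k W B‖
      ≤ ∑ s, ∑ t,
          ((if d s - d t = k then a s else 0) + (if d s - d t = k then b t else 0)) / 2 := by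
        rw [modePairing_apply]
        refine (norm_sum_le _ _).trans <| Finset.sum_le_sum fun s _ =>
          (norm_sum_le _ _).trans <| Finset.sum_le_sum fun t _ => ?_
        split_ifs
        · rw [norm_mul]
          nlinarith [hW s t, hB s t, norm_nonneg (W s t), norm_nonneg (B s t)]
        · simp
    _ = ((∑ s, ∑ t, if d s - d t = k then a s else 0)
          + ∑ s, ∑ t, if d s - d t = k then b t else 0) / 2 := by
        simp only [← Finset.sum_add_distrib, Finset.sum_div]
    _ ≤ (∑ s, a s + ∑ t, b t) / 2 := by
        gcongr (?_ + ?_) / 2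
        · exact Finset.sum_le_sum fun s _ => hrow s
        · rw [Finset.sum_comm]
          exact Finset.sum_le_sum fun t _ => hcol t

lemma modePairing_phaseMatrix_vecMulVec (d : κ → ℤ) (k : ℤ) (φ : κ → ℂ) :
    modePairing d k (phaseMatrix φ) (vecMulVec φ (star φ)) = modeOverlap d k φ := by
  simp only [modePairing_apply, modeOverlap, phaseMatrix, of_apply, vecMulVec_apply,
    Pi.star_apply, Complex.cexp_neg_arg_mul_I_mul_self, norm_mul, norm_star, Complex.ofReal_sum,
    apply_ite Complex.ofReal, Complex.ofReal_mul, Complex.ofReal_zero]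

end ModePairing

section FlagBlock

variable {κ F : Type*}

def flagBlock (f : F) : Matrix (κ × F) (κ × F) ℂ →ₗ[ℂ] Matrix κ κ ℂ where
  toFun A := A.submatrix (·, f) (·, f)
  map_add' _ _ := rfl
  map_smul' _ _ := rfl

lemma flagBlock_apply (f : F) (A : Matrix (κ × F) (κ × F) ℂ) (s t : κ) :
    flagBlock f A s t = A (s, f) (t, f) := rfl

open Kronecker in
lemma flagBlock_kronecker_single_self [DecidableEq F] (X : Matrix κ κ ℂ) (f : F) :
    flagBlock f (X ⊗ₖ single f f 1) = X := by
  ext s t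
  simp [flagBlock_apply]

open Kronecker in
lemma flagBlock_kronecker_single_of_ne [DecidableEq F] (X : Matrix κ κ ℂ) {f g : F} (h : f ≠ g) :
    flagBlock f (X ⊗ₖ single g g 1) = 0 := by
  ext s t
  simp [flagBlock_apply, h.symm]

variable [Fintype κ] [DecidableEq κ] [Fintype F] [DecidableEq F]

lemma flagBlock_Urep_mul_mul_conjTranspose (d : κ → ℤ) (θ : ℝ) (f : F)
    (A : Matrix (κ × F) (κ × F) ℂ) :
    flagBlock f (Urep (fun q : κ × F => d q.1) θ * A * (Urep (fun q : κ × F => d q.1) θ)ᴴ)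
      = Urep d θ * flagBlock f A * (Urep d θ)ᴴ := by
  ext s t
  simp [flagBlock_apply, Urep_mul_mul_conjTranspose_apply_s16]

lemma IsChargeFunctional.comp_flagBlock {d : κ → ℤ} {k : ℤ} {g : Matrix κ κ ℂ →ₗ[ℂ] ℂ}
    (hg : IsChargeFunctional d k g) (f : F) :
    IsChargeFunctional (fun q : κ × F => d q.1) k (g ∘ₗ flagBlock f) := fun θ A => by
  simp only [LinearMap.comp_apply, flagBlock_Urep_mul_mul_conjTranspose, hg θ]

end FlagBlock

namespace IsCPTP

variable {ι κ : Type*} [Fintype ι] [DecidableEq ι] [Fintype κ]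
  {E : Matrix ι ι ℂ →ₗ[ℂ] Matrix κ κ ℂ}

lemma re_apply_single_diag_nonneg (hE : IsCPTP E) (i : ι) (u : κ) :
    0 ≤ (E (single i i 1) u u).re :=
  (Complex.nonneg_iff.mp (hE.1.diag_nonneg (i := (i, u)))).1

lemma sum_re_apply_single_diag (hE : IsCPTP E) (i : ι) : ∑ u, (E (single i i 1) u u).re = 1 := by
  rw [← Complex.re_sum]
  change (E (single i i 1)).trace.re = 1
  rw [hE.2, trace_single_eq_same, Complex.one_re]

lemma two_mul_norm_apply_single_le (hE : IsCPTP E) (i j : ι) (u v : κ) :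
    2 * ‖E (single i j 1) u v‖ ≤ (E (single i i 1) u u).re + (E (single j j 1) v v).re :=
  hE.1.two_mul_norm_apply_le (i, u) (j, v)

end IsCPTP

lemma IsCPTP.sum_re_apply_single_flag_diag_le_one {ι κ F : Type*} [Fintype ι] [DecidableEq ι]
    [Fintype κ] [Fintype F] {E : Matrix ι ι ℂ →ₗ[ℂ] Matrix (κ × F) (κ × F) ℂ} (hE : IsCPTP E)
    (i : ι) (f : F) : ∑ s, (E (single i i 1) (s, f) (s, f)).re ≤ 1 :=
  calc ∑ s, (E (single i i 1) (s, f) (s, f)).re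
      ≤ ∑ s, ∑ g, (E (single i i 1) (s, g) (s, g)).re :=
        Finset.sum_le_sum fun s _ => Finset.single_le_sum
          (f := fun g => (E (single i i 1) (s, g) (s, g)).re)
          (fun g _ => hE.re_apply_single_diag_nonneg i (s, g)) (Finset.mem_univ f)
    _ = 1 := by rw [← Fintype.sum_prod_type', hE.sum_re_apply_single_diag]

lemma IsCPTP.norm_modePairing_flagBlock_apply_single_le {ι κ F : Type*} [Fintype ι]
    [DecidableEq ι] [Fintype κ] [DecidableEq κ] [Fintype F]
    {E : Matrix ι ι ℂ →ₗ[ℂ] Matrix (κ × F) (κ × F) ℂ} (hE : IsCPTP E)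
    {d : κ → ℤ} (hd : Function.Injective d) (k : ℤ) {W : Matrix κ κ ℂ}
    (hW : ∀ s t, ‖W s t‖ ≤ 1) (f : F) (i j : ι) :
    ‖modePairing d k W (flagBlock f (E (single i j 1)))‖ ≤ 1 := by
  refine (norm_modePairing_le hd k hW (fun s => hE.re_apply_single_diag_nonneg i (s, f))
    (fun t => hE.re_apply_single_diag_nonneg j (t, f))
    (fun s t => hE.two_mul_norm_apply_single_le i j (s, f) (t, f))).trans ?_
  linarith [hE.sum_re_apply_single_flag_diag_le_one i f,
    hE.sum_re_apply_single_flag_diag_le_one j f]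

open Kronecker in
theorem stmt_16_general {ι κ : Type*} [Fintype ι] [DecidableEq ι] [Fintype κ] [DecidableEq κ]
    (c : ι → ℤ)
    (d : κ → ℤ) (hd : Function.Injective d)
    (E : Matrix ι ι ℂ →ₗ[ℂ] Matrix (κ × Fin 2) (κ × Fin 2) ℂ)
    (hCPTP : IsCPTP E)
    (hcov : IsCovariant c (fun q : κ × Fin 2 => d q.1) E)
    (ψ : ι → ℂ)
    (φ : κ → ℂ)
    (τ : Matrix κ κ ℂ)
    (p : ℝ)
    (hE : E (Matrix.vecMulVec ψ (star ψ))
        = (p : ℂ) • (Matrix.vecMulVec φ (star φ) ⊗ₖ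
              Matrix.single (0 : Fin 2) (0 : Fin 2) (1:ℂ))
          + ((1 - p : ℝ) : ℂ) •
              (τ ⊗ₖ Matrix.single (1 : Fin 2) (1 : Fin 2) (1:ℂ)))
    (k : ℤ)
    (hden : (∑ i : κ, ∑ j : κ,
        if d i - d j = k then ‖φ i‖ * ‖φ j‖ else 0) ≠ 0) :
    p ≤ (∑ i : ι, ∑ j : ι,
          if c i - c j = k then ‖ψ i‖ * ‖ψ j‖ else 0)
        / (∑ i : κ, ∑ j : κ,
          if d i - d j = k then ‖φ i‖ * ‖φ j‖ else 0) := by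
  change p ≤ modeOverlap c k ψ / modeOverlap d k φ
  rw [le_div_iff₀ ((modeOverlap_nonneg d k φ).lt_of_ne' hden)]
  set T := modePairing d k (phaseMatrix φ) ∘ₗ flagBlock (0 : Fin 2) ∘ₗ E
  have hT : IsChargeFunctional c k T :=
    ((isChargeFunctional_modePairing d k _).comp_flagBlock 0).comp_covariant hcov
  have hsuccess : T (vecMulVec ψ (star ψ)) = (p * modeOverlap d k φ : ℝ) := by
    simp [T, hE, flagBlock_kronecker_single_self, flagBlock_kronecker_single_of_ne,
      modePairing_phaseMatrix_vecMulVec]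
  calc p * modeOverlap d k φ ≤ ‖T (vecMulVec ψ (star ψ))‖ := by
        rw [hsuccess, Complex.norm_real]; exact le_abs_self _
    _ ≤ modeOverlap c k ψ := hT.norm_apply_vecMulVec_le (fun i j =>
        hCPTP.norm_modePairing_flagBlock_apply_single_le hd k
          (fun s t => (norm_phaseMatrix_apply φ s t).le) 0 i j) ψ

open Kronecker in
/-- if a nondeterministic U(1)-covariant operation (modeled as a
covariant channel with a U(1)-invariant success/failure flag) transforms the pure
state `|ψ⟩` into the pure state `|φ⟩` with success probability p, then for every
positive integer k,
`p ≤ (Σ_n |ψ_{n+k}||ψ_n|) / (Σ_n |φ_{n+k}||φ_n|)` whenever the denominator is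
nonzero. -/
theorem stmt_16 {ι κ : Type*} [Fintype ι] [DecidableEq ι] [Fintype κ] [DecidableEq κ]
    (c : ι → ℤ) (hc : Function.Injective c)
    (d : κ → ℤ) (hd : Function.Injective d)
    (E : Matrix ι ι ℂ →ₗ[ℂ] Matrix (κ × Fin 2) (κ × Fin 2) ℂ)
    (hCPTP : IsCPTP E)
    (hcov : IsCovariant c (fun q : κ × Fin 2 => d q.1) E)
    (ψ : ι → ℂ) (hψ : ∑ i : ι, ‖ψ i‖ ^ 2 = 1)
    (φ : κ → ℂ) (hφ : ∑ i : κ, ‖φ i‖ ^ 2 = 1)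
    (τ : Matrix κ κ ℂ) (hτ : IsDensity τ)
    (hτinv : ∀ θ : ℝ, Urep d θ * τ * (Urep d θ)ᴴ = τ)
    (p : ℝ) (hp0 : 0 ≤ p) (hp1 : p ≤ 1)
    (hE : E (Matrix.vecMulVec ψ (star ψ))
        = (p : ℂ) • (Matrix.vecMulVec φ (star φ) ⊗ₖ
              Matrix.single (0 : Fin 2) (0 : Fin 2) (1:ℂ))
          + ((1 - p : ℝ) : ℂ) •
              (τ ⊗ₖ Matrix.single (1 : Fin 2) (1 : Fin 2) (1:ℂ)))
    (k : ℤ) (hk : 0 < k)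
    (hden : (∑ i : κ, ∑ j : κ,
        if d i - d j = k then ‖φ i‖ * ‖φ j‖ else 0) ≠ 0) :
    p ≤ (∑ i : ι, ∑ j : ι,
          if c i - c j = k then ‖ψ i‖ * ‖ψ j‖ else 0)
        / (∑ i : κ, ∑ j : κ,
          if d i - d j = k then ‖φ i‖ * ‖φ j‖ else 0) :=
  stmt_16_general c d hd E hCPTP hcov ψ φ τ p hE k hden
end
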